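/- arXiv:2502.07568 — 2 statements merged into one kernel-verified Lean document; each statement's English description precedes it below -/
import Mathlib

section
/- Let A be an arbitrary Young function (no Δ₂ or growth assumptions), let u ∈ L^A(ℝⁿ), and let u_ε = u * ρ_ε be the mollification of u. Then for all ε > 0 and all s ∈ (0,1), 𝒥_s(u_ε) ≤ 𝒥_s(u). -/
open MeasureTheory Filter Topology
open scoped ENNReal RealInnerProductSpace

noncomputable section

/-- Euclidean space `ℝⁿ`. -/
abbrev Rn (n : ℕ) : Type := EuclideanSpace ℝ (Fin n)

/-- `a` is a Young density and `A` is the Young function it generates: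
`a` is nonnegative, nondecreasing, right continuous, `a 0 = 0`, `a t > 0` for `t > 0`,
`a t → ∞` as `t → ∞`, and `A t = ∫₀ᵗ a(τ) dτ` for `t ≥ 0`. -/
def IsYoungPair (A a : ℝ → ℝ) : Prop :=
  (∀ t, 0 ≤ a t) ∧
  MonotoneOn a (Set.Ici (0 : ℝ)) ∧
  (∀ t, 0 ≤ t → ContinuousWithinAt a (Set.Ici t) t) ∧
  a 0 = 0 ∧
  (∀ t, 0 < t → 0 < a t) ∧
  Tendsto a atTop atTop ∧
  (∀ t, 0 ≤ t → A t = ∫ τ in (0:ℝ)..t, a τ)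

/-- The complementary (conjugate) Young function `Ā(t) = sup {τ t − A τ : τ ≥ 0}`. -/
def conjugateYoung (A : ℝ → ℝ) (t : ℝ) : ℝ :=
  sSup {x | ∃ τ, 0 ≤ τ ∧ x = τ * t - A τ}

/-- The Orlicz modular `∫ A(|u|) dμ`, valued in `[0,∞]`. -/
def orliczModular {α : Type*} [MeasurableSpace α] (μ : Measure α) (A : ℝ → ℝ)
    (u : α → ℝ) : ℝ≥0∞ :=
  ∫⁻ x, ENNReal.ofReal (A (|u x|)) ∂μ

/-- The Luxemburg norm `inf {k > 0 : ∫ A(|u|/k) dμ ≤ 1}`. -/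
def luxNorm {α : Type*} [MeasurableSpace α] (μ : Measure α) (A : ℝ → ℝ)
    (u : α → ℝ) : ℝ :=
  sInf {k | 0 < k ∧ orliczModular μ A (fun x => u x / k) ≤ 1}

/-- Membership in the Orlicz space `L^A`: the modular is finite for some `k > 0`. -/
def MemLA {α : Type*} [MeasurableSpace α] (μ : Measure α) (A : ℝ → ℝ)
    (u : α → ℝ) : Prop :=
  ∃ k, 0 < k ∧ orliczModular μ A (fun x => u x / k) < ⊤

/-- Membership in `E^A`: the modular is finite for every `k > 0`. -/
def MemEA {α : Type*} [MeasurableSpace α] (μ : Measure α) (A : ℝ → ℝ)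
    (u : α → ℝ) : Prop :=
  ∀ k, 0 < k → orliczModular μ A (fun x => u x / k) < ⊤

/-- The measure `dν = |x−y|^{−n} dx dy` on `ℝⁿ × ℝⁿ`. -/
def nuMeasure (n : ℕ) : Measure (Rn n × Rn n) :=
  volume.withDensity fun p => ENNReal.ofReal (‖p.1 - p.2‖ ^ (-(n:ℝ)))

/-- The Hölder quotient `D^s u (x,y) = (u x − u y)/|x−y|^s`. -/
def holderQuot {n : ℕ} (s : ℝ) (u : Rn n → ℝ) (p : Rn n × Rn n) : ℝ :=
  (u p.1 - u p.2) / ‖p.1 - p.2‖ ^ s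

/-- The fractional energy `𝒥_s(u) = (1−s) ∬ A(|D^s u|) dν`, valued in `[0,∞]`. -/
def Js {n : ℕ} (A : ℝ → ℝ) (s : ℝ) (u : Rn n → ℝ) : ℝ≥0∞ :=
  ENNReal.ofReal (1 - s) * ∫⁻ p, ENNReal.ofReal (A (|holderQuot s u p|)) ∂(nuMeasure n)

/-- The real-valued fractional energy `𝒥_s(u)` (Bochner integral version). -/
def JsReal {n : ℕ} (A : ℝ → ℝ) (s : ℝ) (u : Rn n → ℝ) : ℝ :=
  (1 - s) * ∫ p : Rn n × Rn n, A (|holderQuot s u p|) * ‖p.1 - p.2‖ ^ (-(n:ℝ))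

/-- The limit Young function
`A₀(t) = ∫₀ᵗ (∫_{S^{n−1}} A(r |ω⋅e|) dH^{n−1}(ω)) dr/r`, for a fixed unit vector `e`. -/
def A0 {n : ℕ} (A : ℝ → ℝ) (e : Rn n) (t : ℝ) : ℝ :=
  ∫ r in (0:ℝ)..t,
    (∫ ω in Metric.sphere (0 : Rn n) 1, A (r * |⟪ω, e⟫|)
      ∂(Measure.hausdorffMeasure ((n : ℝ) - 1))) / r

/-- `v` is the (distributional) weak gradient of `u`. -/
def HasWeakGradient {n : ℕ} (u : Rn n → ℝ) (v : Rn n → Rn n) : Prop :=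
  LocallyIntegrable u volume ∧ LocallyIntegrable v volume ∧
  ∀ φ : Rn n → ℝ, ContDiff ℝ (⊤ : ℕ∞) φ → HasCompactSupport φ → ∀ i : Fin n,
    ∫ x, u x * fderiv ℝ φ x (EuclideanSpace.single i 1)
      = - ∫ x, ⟪v x, EuclideanSpace.single i 1⟫ * φ x

/-- The limit energy `𝒥(u) = ∫ A₀(|∇u|) dx`, equal to `⊤` when `u` has no weak
gradient (the infimum over the empty set). -/
def Jlim {n : ℕ} (A : ℝ → ℝ) (e : Rn n) (u : Rn n → ℝ) : ℝ≥0∞ :=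
  ⨅ (v : Rn n → Rn n) (_ : HasWeakGradient u v), ∫⁻ x, ENNReal.ofReal (A0 A e ‖v x‖)

/-- The limit energy `𝒥(u) = ∫ A₀(|∇u|) dx` for differentiable `u`. -/
def JlimSmooth {n : ℕ} (A : ℝ → ℝ) (e : Rn n) (u : Rn n → ℝ) : ℝ≥0∞ :=
  ∫⁻ x, ENNReal.ofReal (A0 A e ‖gradient u x‖)

/-- The real-valued limit energy `𝒥(u) = ∫ A₀(|∇u|) dx` for differentiable `u`. -/
def JReal {n : ℕ} (A : ℝ → ℝ) (e : Rn n) (u : Rn n → ℝ) : ℝ :=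
  ∫ x, A0 A e ‖gradient u x‖

/-- The `C²` norm `‖u‖_{C²} = Σ_{i ≤ 2} sup_x ‖D^i u(x)‖`. -/
def C2Norm {n : ℕ} (u : Rn n → ℝ) : ℝ :=
  ∑ i ∈ Finset.range 3, ⨆ x : Rn n, ‖iteratedFDeriv ℝ i u x‖

/-- A standard mollifier: smooth, nonnegative, supported in the closed unit ball,
with unit integral. -/
def IsMollifier {n : ℕ} (ρ : Rn n → ℝ) : Prop :=
  ContDiff ℝ (⊤ : ℕ∞) ρ ∧ (∀ x, 0 ≤ ρ x) ∧ tsupport ρ ⊆ Metric.closedBall 0 1 ∧ (∫ x, ρ x) = 1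

/-- The rescaled mollifier `ρ_ε(x) = ε^{−n} ρ(x/ε)`. -/
def mollScaled {n : ℕ} (ρ : Rn n → ℝ) (ε : ℝ) (x : Rn n) : ℝ :=
  (ε ^ n)⁻¹ * ρ (ε⁻¹ • x)

/-- Convolution `u * ρ (x) = ∫ u(y) ρ(x−y) dy`. -/
def convol {n : ℕ} (u ρ : Rn n → ℝ) (x : Rn n) : ℝ :=
  ∫ y, u y * ρ (x - y)

/-- `n ω_n`, where `ω_n` is the Lebesgue measure of the unit ball of `ℝⁿ`;
this equals the surface measure of the unit sphere. -/
def nOmega (n : ℕ) : ℝ :=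
  n * (volume (Metric.ball (0 : Rn n) 1)).toReal

/-- `F_s(x) = (1−s) ∫ A(|u x − u y|/|x−y|^s) |x−y|^{−n} dy`. -/
def Fs {n : ℕ} (A : ℝ → ℝ) (s : ℝ) (u : Rn n → ℝ) (x : Rn n) : ℝ :=
  (1 - s) * ∫ y, A (|u x - u y| / ‖x - y‖ ^ s) * ‖x - y‖ ^ (-(n:ℝ))

/-- The Matuszewska function of `A` at the origin: `M₀(t) = limsup_{δ→0⁺} A(tδ)/A(δ)`,
valued in `[0,∞]`. -/
def M0 (A : ℝ → ℝ) (t : ℝ) : ℝ≥0∞ :=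
  limsup (fun δ => ENNReal.ofReal (A (t * δ) / A δ)) (𝓝[>] (0:ℝ))

section AuxProofs

open scoped NNReal

/-! ### Young function auxiliary lemmas -/

section Young
variable {a : ℝ → ℝ}

lemma young_ii (h0 : ∀ t, 0 ≤ a t) (hm : MonotoneOn a (Set.Ici (0:ℝ)))
    {x y : ℝ} (hx : 0 ≤ x) (hy : 0 ≤ y) : IntervalIntegrable a volume x y := by
  apply MonotoneOn.intervalIntegrable
  apply hm.mono
  intro t ht
  rcases Set.mem_uIcc.1 ht with h | h
  · exact le_trans hx h.1
  · exact le_trans hy h.1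

lemma young_B_sub (h0 : ∀ t, 0 ≤ a t) (hm : MonotoneOn a (Set.Ici (0:ℝ)))
    {x y : ℝ} (hx : 0 ≤ x) (hxy : x ≤ y) :
    (∫ τ in (0:ℝ)..y, a τ) - ∫ τ in (0:ℝ)..x, a τ = ∫ τ in x..y, a τ := by
  rw [sub_eq_iff_eq_add', ← intervalIntegral.integral_add_adjacent_intervals
    (young_ii h0 hm le_rfl hx) (young_ii h0 hm hx (hx.trans hxy))]

lemma young_B_mono (h0 : ∀ t, 0 ≤ a t) (hm : MonotoneOn a (Set.Ici (0:ℝ))) :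
    MonotoneOn (fun t => ∫ τ in (0:ℝ)..t, a τ) (Set.Ici (0:ℝ)) := by
  intro x hx y _ hxy
  have h := young_B_sub h0 hm hx hxy
  have : 0 ≤ ∫ τ in x..y, a τ := intervalIntegral.integral_nonneg hxy (fun u _ => h0 u)
  simp only []
  linarith

lemma young_B_upper (h0 : ∀ t, 0 ≤ a t) (hm : MonotoneOn a (Set.Ici (0:ℝ)))
    {x y : ℝ} (hx : 0 ≤ x) (hxy : x ≤ y) :
    (∫ τ in x..y, a τ) ≤ a y * (y - x) := by
  have : (∫ τ in x..y, a τ) ≤ ∫ _ in x..y, a y := by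
    apply intervalIntegral.integral_mono_on hxy (young_ii h0 hm hx (hx.trans hxy))
      intervalIntegrable_const
    intro t ht
    exact hm (hx.trans ht.1) (hx.trans hxy) ht.2
  simpa [mul_comm] using this

lemma young_B_lower (h0 : ∀ t, 0 ≤ a t) (hm : MonotoneOn a (Set.Ici (0:ℝ)))
    {x y : ℝ} (hx : 0 ≤ x) (hxy : x ≤ y) :
    a x * (y - x) ≤ ∫ τ in x..y, a τ := by
  have : (∫ _ in x..y, a x) ≤ ∫ τ in x..y, a τ := by
    apply intervalIntegral.integral_mono_on hxy intervalIntegrable_const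
      (young_ii h0 hm hx (hx.trans hxy))
    intro t ht
    exact hm hx (hx.trans ht.1) ht.1
  simpa [mul_comm] using this

lemma young_B_convex (h0 : ∀ t, 0 ≤ a t) (hm : MonotoneOn a (Set.Ici (0:ℝ))) :
    ConvexOn ℝ (Set.Ici (0:ℝ)) (fun t => ∫ τ in (0:ℝ)..t, a τ) := by
  apply convexOn_of_slope_mono_adjacent (convex_Ici 0)
  intro x y z hx hz hxy hyz
  have hy : (0:ℝ) ≤ y := le_of_lt (lt_of_le_of_lt hx hxy)
  rw [young_B_sub h0 hm hx hxy.le, young_B_sub h0 hm hy hyz.le]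
  have h1 := young_B_upper h0 hm hx hxy.le
  have h2 := young_B_lower h0 hm hy hyz.le
  have hay : a y ≤ (∫ τ in y..z, a τ) / (z - y) := by
    rw [le_div_iff₀ (by linarith)]
    linarith
  have d1 : (∫ τ in x..y, a τ) / (y - x) ≤ a y := by
    rw [div_le_iff₀ (by linarith)]
    linarith
  exact d1.trans hay

lemma young_B_lipOn (h0 : ∀ t, 0 ≤ a t) (hm : MonotoneOn a (Set.Ici (0:ℝ))) (M : ℝ) :
    LipschitzOnWith (Real.toNNReal (a M)) (fun t => ∫ τ in (0:ℝ)..t, a τ) (Set.Icc 0 M) := by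
  apply LipschitzOnWith.of_dist_le_mul
  intro x hx y hy
  wlog hxy : y ≤ x generalizing x y
  · rw [dist_comm, dist_comm x y]; exact this y hy x hx (le_of_not_ge hxy)
  have key : (∫ τ in (0:ℝ)..x, a τ) - (∫ τ in (0:ℝ)..y, a τ) = ∫ τ in y..x, a τ :=
    young_B_sub h0 hm hy.1 hxy
  have h1 : (∫ τ in y..x, a τ) ≤ a M * (x - y) := by
    refine le_trans (young_B_upper h0 hm hy.1 hxy) ?_
    have := hm (hy.1.trans hxy) (hx.1.trans hx.2) hx.2
    nlinarith
  have h2 : 0 ≤ ∫ τ in y..x, a τ := intervalIntegral.integral_nonneg hxy (fun u _ => h0 u)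
  rw [Real.dist_eq, Real.dist_eq, Real.coe_toNNReal _ (h0 M)]
  rw [abs_of_nonneg (by linarith), abs_of_nonneg (by linarith)]
  linarith

lemma young_B_contOn (h0 : ∀ t, 0 ≤ a t) (hm : MonotoneOn a (Set.Ici (0:ℝ))) :
    ContinuousOn (fun t => ∫ τ in (0:ℝ)..t, a τ) (Set.Ici (0:ℝ)) := by
  intro t ht
  have h1 : ContinuousWithinAt (fun t => ∫ τ in (0:ℝ)..t, a τ) (Set.Icc 0 (t+1)) t :=
    ((young_B_lipOn h0 hm (t+1)).continuousOn) t ⟨ht, by linarith [Set.mem_Ici.1 ht]⟩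
  apply h1.mono_of_mem_nhdsWithin
  have : Set.Ici (0:ℝ) ∩ Set.Iio (t+1) ⊆ Set.Icc 0 (t+1) := by
    intro u hu; exact ⟨hu.1, hu.2.le⟩
  exact Filter.mem_of_superset (inter_mem_nhdsWithin _ (Iio_mem_nhds (by linarith))) this

lemma g_convex {B : ℝ → ℝ} (hmono : MonotoneOn B (Set.Ici (0:ℝ)))
    (hconv : ConvexOn ℝ (Set.Ici (0:ℝ)) B) :
    ConvexOn ℝ Set.univ (fun t : ℝ => B |t|) := by
  refine ⟨convex_univ, fun x _ y _ α β hα hβ hαβ => ?_⟩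
  simp only [smul_eq_mul]
  have h1 : |α * x + β * y| ≤ α * |x| + β * |y| := by
    refine (abs_add_le _ _).trans ?_
    simp [abs_mul, abs_of_nonneg hα, abs_of_nonneg hβ]
  have hx0 : (0:ℝ) ≤ |x| := abs_nonneg x
  have hy0 : (0:ℝ) ≤ |y| := abs_nonneg y
  have hmem : α * |x| + β * |y| ∈ Set.Ici (0:ℝ) := Set.mem_Ici.2 (by positivity)
  have m := hmono (Set.mem_Ici.2 (abs_nonneg _)) hmem h1
  have c := hconv.2 (Set.mem_Ici.2 hx0) (Set.mem_Ici.2 hy0) hα hβ hαβ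
  simp only [smul_eq_mul] at c
  exact m.trans c

lemma g_cont {B : ℝ → ℝ} (hcont : ContinuousOn B (Set.Ici (0:ℝ))) :
    Continuous (fun t : ℝ => B |t|) := by
  rw [← continuousOn_univ]
  exact hcont.comp continuous_abs.continuousOn (fun x _ => Set.mem_Ici.2 (abs_nonneg x))

lemma g_nonneg {B : ℝ → ℝ} (hmono : MonotoneOn B (Set.Ici (0:ℝ))) (hB0 : B 0 = 0) (t : ℝ) :
    0 ≤ B |t| := by
  have := hmono (Set.mem_Ici.2 le_rfl) (Set.mem_Ici.2 (abs_nonneg t)) (abs_nonneg t)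
  linarith

end Young

/-! ### Mollifier auxiliary lemmas -/

section Moll
variable {n : ℕ} {ρ : Rn n → ℝ} {ε : ℝ}

lemma moll_cont (hρ : IsMollifier ρ) : Continuous (mollScaled ρ ε) :=
  continuous_const.mul (hρ.1.continuous.comp (continuous_const_smul ε⁻¹))

lemma moll_nonneg (hρ : IsMollifier ρ) (hε : 0 < ε) (x : Rn n) : 0 ≤ mollScaled ρ ε x :=
  mul_nonneg (inv_nonneg.2 (pow_nonneg hε.le n)) (hρ.2.1 _)

lemma moll_hcs (hρ : IsMollifier ρ) (hε : 0 < ε) : HasCompactSupport (mollScaled ρ ε) := by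
  apply HasCompactSupport.intro (isCompact_closedBall (0 : Rn n) ε)
  intro x hx
  have hx' : ε < ‖x‖ := by
    by_contra h
    exact hx (Metric.mem_closedBall.2 (by simpa [dist_eq_norm] using le_of_not_gt h))
  have hns : ε⁻¹ • x ∉ tsupport ρ := by
    intro hmem
    have := hρ.2.2.1 hmem
    rw [Metric.mem_closedBall, dist_zero_right, norm_smul] at this
    rw [Real.norm_eq_abs, abs_of_pos (inv_pos.2 hε)] at this
    have := (inv_mul_le_iff₀ hε).1 this
    linarith
  have : ρ (ε⁻¹ • x) = 0 := image_eq_zero_of_notMem_tsupport hns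
  simp [mollScaled, this]

lemma moll_integrable (hρ : IsMollifier ρ) (hε : 0 < ε) :
    Integrable (mollScaled ρ ε) volume :=
  (moll_cont hρ).integrable_of_hasCompactSupport (moll_hcs hρ hε)

lemma moll_integral (hρ : IsMollifier ρ) (hε : 0 < ε) :
    ∫ x, mollScaled ρ ε x = 1 := by
  unfold mollScaled
  rw [MeasureTheory.integral_const_mul]
  rw [Measure.integral_comp_smul volume ρ ε⁻¹]
  rw [finrank_euclideanSpace_fin, hρ.2.2.2]
  have h1 : ((ε⁻¹ : ℝ) ^ n)⁻¹ = ε ^ n := by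
    rw [← inv_pow, inv_inv]
  rw [h1]
  have h2 : |ε ^ n| = ε ^ n := abs_of_pos (pow_pos hε n)
  rw [h2, smul_eq_mul, mul_one]
  exact inv_mul_cancel₀ (ne_of_gt (pow_pos hε n))

end Moll

/-! ### Congruence lemmas -/

section Congr
variable {n : ℕ}

lemma convol_congr {u v φ : Rn n → ℝ} (h : u =ᵐ[volume] v) : convol u φ = convol v φ := by
  funext x
  exact integral_congr_ae (h.mono fun y hy => by dsimp only; rw [hy])

lemma locallyIntegrable_congr' {f h : Rn n → ℝ} (hf : LocallyIntegrable f volume)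
    (hfh : f =ᵐ[volume] h) : LocallyIntegrable h volume := by
  rw [MeasureTheory.locallyIntegrable_iff] at hf ⊢
  intro k hk
  exact (hf k hk).congr (ae_restrict_of_ae hfh)

lemma nu_ae_eq {u v : Rn n → ℝ} (h : u =ᵐ[volume] v) (s : ℝ) (G : ℝ → ℝ≥0∞) :
    ∫⁻ p, G (holderQuot s u p) ∂(nuMeasure n) = ∫⁻ p, G (holderQuot s v p) ∂(nuMeasure n) := by
  apply lintegral_congr_ae
  set N := {x : Rn n | ¬ u x = v x} with hN_def
  have hN : volume N = 0 := ae_iff.1 h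
  have hprod : (volume : Measure (Rn n × Rn n)) {p | p.1 ∈ N ∨ p.2 ∈ N} = 0 := by
    have hsub : {p : Rn n × Rn n | p.1 ∈ N ∨ p.2 ∈ N} ⊆ (N ×ˢ Set.univ) ∪ (Set.univ ×ˢ N) := by
      rintro p (hp | hp)
      · exact Or.inl ⟨hp, trivial⟩
      · exact Or.inr ⟨trivial, hp⟩
    refine measure_mono_null hsub (measure_union_null ?_ ?_)
    · rw [Measure.volume_eq_prod, Measure.prod_prod, hN, zero_mul]
    · rw [Measure.volume_eq_prod, Measure.prod_prod, hN, mul_zero]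
  have hν : (nuMeasure n) {p | p.1 ∈ N ∨ p.2 ∈ N} = 0 :=
    (withDensity_absolutelyContinuous volume _) hprod
  filter_upwards [measure_eq_zero_iff_ae_notMem.1 hν] with p hp
  simp only [hN_def, Set.mem_setOf_eq, not_or, not_not] at hp
  unfold holderQuot
  rw [hp.1, hp.2]

end Congr

/-! ### Product translation invariance and the core convexity estimate -/

instance nuRightInv (n : ℕ) : (volume : Measure (Rn n × Rn n)).IsAddRightInvariant := by
  rw [MeasureTheory.Measure.volume_eq_prod]
  exact Measure.prod.instIsAddRightInvariant

lemma core {n : ℕ} {g : ℝ → ℝ} (hgc : Continuous g) (hgconv : ConvexOn ℝ Set.univ g)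
    (hg0 : g 0 = 0) (hgnn : ∀ t, 0 ≤ g t)
    {v : Rn n → ℝ} (hv : Measurable v) (hvl : LocallyIntegrable v volume)
    {φ : Rn n → ℝ} (hφc : Continuous φ) (hφnn : ∀ x, 0 ≤ φ x)
    (hφcs : HasCompactSupport φ) (hφint : (∫ x, φ x) = 1) (s : ℝ) :
    ∫⁻ p, ENNReal.ofReal (g (holderQuot s (convol v φ) p)) ∂(nuMeasure n)
      ≤ ∫⁻ p, ENNReal.ofReal (g (holderQuot s v p)) ∂(nuMeasure n) := by
  set c : Rn n → ℝ := convol v φ with hc_def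
  set W : Rn n × Rn n → ℝ≥0∞ := fun p => ENNReal.ofReal (‖p.1 - p.2‖ ^ (-(n:ℝ))) with hW_def
  have hW : Measurable W := ((continuous_fst.sub continuous_snd).norm.measurable.pow_const _).ennreal_ofReal
  have hq_meas : Measurable fun p : Rn n × Rn n => holderQuot s v p := by
    unfold holderQuot
    exact ((hv.comp measurable_fst).sub (hv.comp measurable_snd)).div
      ((continuous_fst.sub continuous_snd).norm.measurable.pow_const _)
  set K : Rn n × Rn n → ℝ≥0∞ := fun p => ENNReal.ofReal (g (holderQuot s v p)) with hK_def
  have hK : Measurable K := (hgc.measurable.comp hq_meas).ennreal_ofReal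
  have hT : Measurable fun q : (Rn n × Rn n) × Rn n => ((q.1.1 - q.2, q.1.2 - q.2) : Rn n × Rn n) :=
    ((continuous_fst.fst.sub continuous_snd).prodMk (continuous_fst.snd.sub continuous_snd)).measurable
  have Fm : Measurable fun q : (Rn n × Rn n) × Rn n =>
      ENNReal.ofReal (φ q.2) * K (q.1.1 - q.2, q.1.2 - q.2) :=
    ((hφc.comp continuous_snd).measurable.ennreal_ofReal).mul (hK.comp hT)
  set H : Rn n × Rn n → ℝ≥0∞ := fun p => ∫⁻ z, ENNReal.ofReal (φ z) * K (p.1 - z, p.2 - z) with hH_def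
  have hH : Measurable H := Measurable.lintegral_prod_right' Fm
  have hφint' : Integrable φ volume := hφc.integrable_of_hasCompactSupport hφcs
  have hφ1 : (∫⁻ z, ENNReal.ofReal (φ z)) = 1 := by
    rw [← ofReal_integral_eq_lintegral_ofReal hφint' (Eventually.of_forall hφnn), hφint,
      ENNReal.ofReal_one]
  have hν : nuMeasure n = volume.withDensity W := rfl
  have step_inv : ∀ z : Rn n, (∫⁻ p : Rn n × Rn n, K (p.1 - z, p.2 - z) * W p)
      = ∫⁻ p : Rn n × Rn n, K p * W p := by
    intro z
    have h1 : ∀ p : Rn n × Rn n, K (p.1 - z, p.2 - z) * W p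
        = (fun q : Rn n × Rn n => K q * W q) (p - (z, z)) := by
      intro p
      have e1 : p - (z, z) = (p.1 - z, p.2 - z) := rfl
      have e2 : W (p.1 - z, p.2 - z) = W p := by
        simp only [hW_def]
        rw [sub_sub_sub_cancel_right]
      calc K (p.1 - z, p.2 - z) * W p
          = K (p.1 - z, p.2 - z) * W (p.1 - z, p.2 - z) := by rw [e2]
        _ = (fun q : Rn n × Rn n => K q * W q) (p - (z, z)) := by rw [e1]
    simp_rw [h1]
    exact lintegral_sub_right_eq_self (fun q : Rn n × Rn n => K q * W q) (z, z)
  have swap_meas : Measurable fun q : (Rn n × Rn n) × Rn n =>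
      W q.1 * (ENNReal.ofReal (φ q.2) * K (q.1.1 - q.2, q.1.2 - q.2)) :=
    (hW.comp measurable_fst).mul Fm
  have step1 : ∫⁻ p, H p ∂(nuMeasure n) = ∫⁻ p, K p ∂(nuMeasure n) := by
    rw [hν, lintegral_withDensity_eq_lintegral_mul volume hW hH,
      lintegral_withDensity_eq_lintegral_mul volume hW hK]
    calc ∫⁻ p, (W * H) p
        = ∫⁻ p : Rn n × Rn n, ∫⁻ z, W p * (ENNReal.ofReal (φ z) * K (p.1 - z, p.2 - z)) := by
          apply lintegral_congr; intro p
          rw [Pi.mul_apply, hH_def]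
          exact (lintegral_const_mul' (W p) _ ENNReal.ofReal_ne_top).symm
      _ = ∫⁻ z, ∫⁻ p : Rn n × Rn n, W p * (ENNReal.ofReal (φ z) * K (p.1 - z, p.2 - z)) :=
          lintegral_lintegral_swap swap_meas.aemeasurable
      _ = ∫⁻ z, ENNReal.ofReal (φ z) * ∫⁻ p : Rn n × Rn n, K (p.1 - z, p.2 - z) * W p := by
          apply lintegral_congr; intro z
          rw [← lintegral_const_mul' (ENNReal.ofReal (φ z)) _ ENNReal.ofReal_ne_top]
          apply lintegral_congr; intro p
          ring
      _ = ∫⁻ z, ENNReal.ofReal (φ z) * ∫⁻ p : Rn n × Rn n, K p * W p := by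
          simp_rw [step_inv]
      _ = (∫⁻ z, ENNReal.ofReal (φ z)) * ∫⁻ p : Rn n × Rn n, K p * W p :=
          lintegral_mul_const'' _ hφc.measurable.ennreal_ofReal.aemeasurable
      _ = ∫⁻ p, (W * K) p := by
          rw [hφ1, one_mul]
          apply lintegral_congr; intro p
          rw [Pi.mul_apply, mul_comm]
  have pointwise : ∀ p : Rn n × Rn n, H p < ⊤ →
      ENNReal.ofReal (g (holderQuot s c p)) ≤ H p := by
    rintro ⟨x, y⟩ hHp
    by_cases hxy : x = y
    · subst hxy
      have h0 : holderQuot s c (x, x) = 0 := by simp [holderQuot]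
      rw [h0, hg0, ENNReal.ofReal_zero]
      exact bot_le
    · have hd : 0 < ‖x - y‖ := by
        rw [norm_pos_iff]
        exact sub_ne_zero.2 hxy
      set ds : ℝ := ‖x - y‖ ^ s with hds_def
      have hds : 0 < ds := Real.rpow_pos_of_pos hd s
      set f : Rn n → ℝ := fun z => (v (x - z) - v (y - z)) / ds with hf_def
      have hq_eq : ∀ z, holderQuot s v (x - z, y - z) = f z := by
        intro z
        simp only [holderQuot, hf_def, hds_def]
        rw [sub_sub_sub_cancel_right]
      have I1 : ∀ x0 : Rn n, Integrable (fun z => v (x0 - z) * φ z) volume := by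
        intro x0
        have h := HasCompactSupport.convolutionExists_right
          (L := ContinuousLinearMap.mul ℝ ℝ) hφcs hvl hφc x0
        simp only [ConvolutionExistsAt, ContinuousLinearMap.mul_apply'] at h
        have h2 := h.comp_sub_left x0
        simp only [sub_sub_cancel] at h2
        exact h2
      have hconv_eq : ∀ x0 : Rn n, convol v φ x0 = ∫ z, v (x0 - z) * φ z := by
        intro x0
        calc convol v φ x0 = ∫ z, (fun t => v t * φ (x0 - t)) (x0 - z) :=
              (integral_sub_left_eq_self (fun t => v t * φ (x0 - t)) volume x0).symm
          _ = ∫ z, v (x0 - z) * φ z := by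
              simp only [sub_sub_cancel]
      set φν : Rn n → ℝ≥0 := fun z => Real.toNNReal (φ z) with hφν_def
      have hφν_meas : Measurable φν := measurable_real_toNNReal.comp hφc.measurable
      set μz : Measure (Rn n) := volume.withDensity (fun z => (φν z : ℝ≥0∞)) with hμz_def
      have hcoe : ∀ z, ((φν z : ℝ≥0∞)) = ENNReal.ofReal (φ z) := fun _ => rfl
      haveI : IsProbabilityMeasure μz := by
        constructor
        rw [hμz_def, withDensity_apply _ MeasurableSet.univ, Measure.restrict_univ]
        exact hφ1
      have hf_meas : Measurable f :=
        ((hv.comp (measurable_id.const_sub x)).sub (hv.comp (measurable_id.const_sub y))).div_const ds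
      have hfi : Integrable f μz := by
        rw [hμz_def, integrable_withDensity_iff hφν_meas.coe_nnreal_ennreal
          (Eventually.of_forall fun z => ENNReal.coe_lt_top)]
        have heq : (fun z => f z * ((φν z : ℝ≥0∞)).toReal)
            = fun z => (v (x - z) * φ z - v (y - z) * φ z) * ds⁻¹ := by
          funext z
          rw [ENNReal.coe_toReal, hφν_def]
          simp only []
          rw [Real.coe_toNNReal _ (hφnn z), hf_def]
          simp only []
          rw [div_eq_mul_inv]
          ring
        rw [heq]
        exact ((I1 x).sub (I1 y)).mul_const _
      have hgf_meas : Measurable fun z => ENNReal.ofReal (g (f z)) :=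
        (hgc.measurable.comp hf_meas).ennreal_ofReal
      have hlint : ∫⁻ z, ENNReal.ofReal (g (f z)) ∂μz = H (x, y) := by
        rw [hμz_def, lintegral_withDensity_eq_lintegral_mul volume hφν_meas.coe_nnreal_ennreal
          hgf_meas]
        apply lintegral_congr; intro z
        rw [Pi.mul_apply, hcoe, hK_def]
        simp only []
        rw [hq_eq]
      have hgfi : Integrable (fun z => g (f z)) μz := by
        refine ⟨(hgc.measurable.comp hf_meas).aestronglyMeasurable, ?_⟩
        rw [hasFiniteIntegral_iff_ofReal (Eventually.of_forall fun z => hgnn (f z))]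
        rw [hlint]
        exact hHp
      have hint_f : ∫ z, f z ∂μz = holderQuot s c (x, y) := by
        rw [hμz_def, integral_withDensity_eq_integral_smul hφν_meas f]
        have heq : (fun z => φν z • f z)
            = fun z => (v (x - z) * φ z - v (y - z) * φ z) / ds := by
          funext z
          rw [NNReal.smul_def, smul_eq_mul, hφν_def]
          simp only []
          rw [Real.coe_toNNReal _ (hφnn z), hf_def]
          simp only []
          rw [div_eq_mul_inv, div_eq_mul_inv]
          ring
        rw [heq]
        have : ∫ z, (v (x - z) * φ z - v (y - z) * φ z) / ds
            = (∫ z, (v (x - z) * φ z - v (y - z) * φ z)) / ds := integral_div ds _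
        rw [this, integral_sub (I1 x) (I1 y), ← hconv_eq x, ← hconv_eq y]
        rfl
      have jens : g (∫ z, f z ∂μz) ≤ ∫ z, g (f z) ∂μz :=
        hgconv.map_integral_le hgc.continuousOn isClosed_univ
          (Eventually.of_forall fun z => Set.mem_univ _) hfi hgfi
      rw [hint_f] at jens
      calc ENNReal.ofReal (g (holderQuot s c (x, y)))
          ≤ ENNReal.ofReal (∫ z, g (f z) ∂μz) := ENNReal.ofReal_le_ofReal jens
        _ = ∫⁻ z, ENNReal.ofReal (g (f z)) ∂μz :=
            ofReal_integral_eq_lintegral_ofReal hgfi (Eventually.of_forall fun z => hgnn _)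
        _ = H (x, y) := hlint
  by_cases htop : (∫⁻ p, K p ∂(nuMeasure n)) = ⊤
  · rw [hK_def] at htop
    rw [htop]
    exact le_top
  · calc ∫⁻ p, ENNReal.ofReal (g (holderQuot s c p)) ∂(nuMeasure n)
        ≤ ∫⁻ p, H p ∂(nuMeasure n) := by
          apply lintegral_mono_ae
          exact (ae_lt_top hH (step1.trans_ne htop)).mono fun p hp => pointwise p hp
      _ = ∫⁻ p, K p ∂(nuMeasure n) := step1


end AuxProofs

/-- For an arbitrary Young function `A` and `u ∈ L^A(ℝⁿ)`,
the fractional energy decreases under mollification: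
`𝒥_s(u_ε) ≤ 𝒥_s(u)` for all `ε > 0` and `s ∈ (0,1)`. -/
theorem statement3 {n : ℕ} (A a : ℝ → ℝ) (hA : IsYoungPair A a)
    (u : Rn n → ℝ) (hu : LocallyIntegrable u volume) (huA : MemLA volume A u)
    (ρ : Rn n → ℝ) (hρ : IsMollifier ρ) :
    ∀ ε, 0 < ε → ∀ s ∈ Set.Ioo (0:ℝ) 1,
      Js A s (convol u (mollScaled ρ ε)) ≤ Js A s u := by
  intro ε hε s hs
  obtain ⟨ha0, haMono, -, -, -, -, hAeq⟩ := hA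
  have hB0 : (∫ τ in (0:ℝ)..(0:ℝ), a τ) = 0 := intervalIntegral.integral_same
  set g : ℝ → ℝ := fun t => ∫ τ in (0:ℝ)..|t|, a τ with hg_def
  have hgc : Continuous g := g_cont (young_B_contOn ha0 haMono)
  have hgconv : ConvexOn ℝ Set.univ g :=
    g_convex (young_B_mono ha0 haMono) (young_B_convex ha0 haMono)
  have hgnn : ∀ t, 0 ≤ g t := g_nonneg (young_B_mono ha0 haMono) hB0
  have hg0 : g 0 = 0 := by
    simp only [hg_def, abs_zero]
    exact hB0
  have hAg : ∀ t : ℝ, A |t| = g t := fun t => hAeq |t| (abs_nonneg t)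
  have hφc := moll_cont (n := n) (ε := ε) hρ
  have hφnn := moll_nonneg hρ hε
  have hφcs := moll_hcs hρ hε
  have hφint := moll_integral hρ hε
  have hum := hu.aestronglyMeasurable
  set v : Rn n → ℝ := hum.mk u with hv_def
  have huv : u =ᵐ[volume] v := hum.ae_eq_mk
  have hvmeas : Measurable v := hum.stronglyMeasurable_mk.measurable
  have hvl : LocallyIntegrable v volume := locallyIntegrable_congr' hu huv
  have hcc : convol u (mollScaled ρ ε) = convol v (mollScaled ρ ε) := convol_congr huv
  unfold Js
  rw [hcc]
  have h1 : ∫⁻ p, ENNReal.ofReal (A |holderQuot s u p|) ∂(nuMeasure n)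
      = ∫⁻ p, ENNReal.ofReal (g (holderQuot s v p)) ∂(nuMeasure n) := by
    simp only [hAg]
    exact nu_ae_eq huv s (fun t => ENNReal.ofReal (g t))
  have h2 : ∫⁻ p, ENNReal.ofReal (A |holderQuot s (convol v (mollScaled ρ ε)) p|) ∂(nuMeasure n)
      = ∫⁻ p, ENNReal.ofReal (g (holderQuot s (convol v (mollScaled ρ ε)) p)) ∂(nuMeasure n) := by
    simp only [hAg]
  rw [h1, h2]
  exact mul_le_mul_right
    (core hgc hgconv hg0 hgnn hvmeas hvl hφc hφnn hφcs hφint s) _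
end
end

section
/- Let A be an arbitrary Young function and u ∈ C²_c(ℝⁿ). Then there exists a constant C > 0, depending only on A and the C² norm of u (one may take C = a(‖∇u‖_∞) · ½‖D²u‖_∞, where a is the right-continuous density of A), such that for all s ∈ (0,1) and all x, y ∈ ℝⁿ with 0 < |x−y| ≤ 1, |A(|u(x) − u(y)| / |x−y|^s) − A(|∇u(x) · (x−y)| / |x−y|^s)| ≤ C |x−y|^{2−s}. -/
open MeasureTheory Filter Topology
open scoped ENNReal RealInnerProductSpace

noncomputable section

/-- **estimate (3.4).** For an arbitrary Young function `A` and
`u ∈ C²_c(ℝⁿ)` there is a constant `C > 0`, depending only on `A` and the `C²`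
norm of `u`, such that for all `s ∈ (0,1)` and `x, y` with `0 < |x−y| ≤ 1`,
`|A(|u x − u y|/|x−y|^s) − A(|∇u(x)⋅(x−y)|/|x−y|^s)| ≤ C |x−y|^{2−s}`. -/
theorem statement11 {n : ℕ} (A a : ℝ → ℝ) (hA : IsYoungPair A a)
    (u : Rn n → ℝ) (hu : ContDiff ℝ 2 u) (hsupp : HasCompactSupport u) :
    ∃ C, 0 < C ∧ ∀ s ∈ Set.Ioo (0:ℝ) 1, ∀ x y : Rn n,
      0 < ‖x - y‖ → ‖x - y‖ ≤ 1 →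
      |A (|u x - u y| / ‖x - y‖ ^ s) - A (|⟪gradient u x, x - y⟫| / ‖x - y‖ ^ s)|
        ≤ C * ‖x - y‖ ^ (2 - s) := by
  classical
  obtain ⟨ha0, hamono, _, _, _, _, hAint⟩ := hA
  -- Lipschitz estimate for A on [0, M]
  have hAlip : ∀ M p q : ℝ, 0 ≤ p → 0 ≤ q → p ≤ M → q ≤ M →
      |A p - A q| ≤ a M * |p - q| := by
    intro M p q hp hq hpM hqM
    have hint : ∀ t : ℝ, 0 ≤ t → IntervalIntegrable a volume 0 t := by
      intro t ht
      refine MonotoneOn.intervalIntegrable (hamono.mono ?_)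
      rw [Set.uIcc_of_le ht]
      exact fun z hz => hz.1
    have hsub : A p - A q = ∫ τ in q..p, a τ := by
      rw [hAint p hp, hAint q hq,
        ← intervalIntegral.integral_interval_sub_left (hint p hp) (hint q hq)]
    rw [hsub]
    have hb : ∀ z ∈ Set.uIoc q p, ‖a z‖ ≤ a M := by
      intro z hz
      have hz1 : min q p < z := hz.1
      have hz0 : 0 ≤ z := le_of_lt (lt_of_le_of_lt (le_min hq hp) hz1)
      have hzM : z ≤ M := le_trans hz.2 (max_le hqM hpM)
      rw [Real.norm_eq_abs, abs_of_nonneg (ha0 z)]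
      exact hamono hz0 (le_trans hz0 hzM) hzM
    have hnorm := intervalIntegral.norm_integral_le_of_norm_le_const hb
    calc |∫ τ in q..p, a τ| = ‖∫ τ in q..p, a τ‖ := (Real.norm_eq_abs _).symm
      _ ≤ a M * |p - q| := hnorm
  -- Lipschitz constants for u and its derivative
  obtain ⟨K1, hK1⟩ := ContDiff.lipschitzWith_of_hasCompactSupport hsupp hu (by norm_num)
  have hfd : ContDiff ℝ 1 (fderiv ℝ u) := hu.fderiv_right (m := 1) (by norm_num)
  obtain ⟨K2, hK2⟩ := ContDiff.lipschitzWith_of_hasCompactSupport (hsupp.fderiv ℝ) hfd (by norm_num)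
  refine ⟨(a K1 + 1) * ((K2 : ℝ) + 1), mul_pos (by linarith [ha0 (K1:ℝ)]) (by positivity), ?_⟩
  rintro s ⟨hs0, hs1⟩ x y hr hr1
  set r : ℝ := ‖x - y‖ with hrdef
  have hrs : (0:ℝ) < r ^ s := Real.rpow_pos_of_pos hr s
  -- identify the gradient pairing with the Fréchet derivative
  have hgrad : ⟪gradient u x, x - y⟫ = fderiv ℝ u x (x - y) := by
    simp [gradient, InnerProductSpace.toDual_symm_apply]
  -- Taylor estimate
  have hTaylor : |(u x - u y) - fderiv ℝ u x (x - y)| ≤ (K2 : ℝ) * r ^ 2 := by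
    have hconv : Convex ℝ (Metric.closedBall x r) := convex_closedBall x r
    have hbound : ∀ z ∈ Metric.closedBall x r,
        ‖fderiv ℝ u z - fderiv ℝ u x‖ ≤ (K2 : ℝ) * r := by
      intro z hz
      have := hK2.dist_le_mul z x
      rw [dist_eq_norm] at this
      refine le_trans this ?_
      have hzx : dist z x ≤ r := Metric.mem_closedBall.1 hz
      exact mul_le_mul_of_nonneg_left hzx K2.coe_nonneg
    have hx : x ∈ Metric.closedBall x r := Metric.mem_closedBall_self hr.le
    have hy : y ∈ Metric.closedBall x r := by
      rw [Metric.mem_closedBall, dist_eq_norm, ← norm_neg]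
      simp [hrdef]
    have := hconv.norm_image_sub_le_of_norm_fderiv_le'
      (fun z _ => (hu.differentiable (by norm_num)).differentiableAt) hbound hx hy
    -- this : ‖u y - u x - fderiv ℝ u x (y - x)‖ ≤ (K2 * r) * ‖y - x‖
    have hneg : (u x - u y) - fderiv ℝ u x (x - y)
        = -((u y - u x) - fderiv ℝ u x (y - x)) := by
      rw [map_sub, map_sub]; ring
    rw [← Real.norm_eq_abs, hneg, norm_neg]
    calc ‖(u y - u x) - fderiv ℝ u x (y - x)‖ ≤ (K2 : ℝ) * r * ‖y - x‖ := this
      _ = (K2 : ℝ) * r ^ 2 := by rw [norm_sub_rev]; ring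
  -- bounds on the two arguments of A
  set p : ℝ := |u x - u y| / r ^ s with hpdef
  set q : ℝ := |fderiv ℝ u x (x - y)| / r ^ s with hqdef
  have huxy : |u x - u y| ≤ (K1 : ℝ) * r := by
    have := hK1.dist_le_mul x y
    rwa [Real.dist_eq, dist_eq_norm] at this
  have hfdxy : |fderiv ℝ u x (x - y)| ≤ (K1 : ℝ) * r := by
    have h1 : ‖fderiv ℝ u x (x - y)‖ ≤ ‖fderiv ℝ u x‖ * ‖x - y‖ :=
      (fderiv ℝ u x).le_opNorm _
    have h2 : ‖fderiv ℝ u x‖ ≤ (K1 : ℝ) := norm_fderiv_le_of_lipschitz ℝ hK1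
    calc |fderiv ℝ u x (x - y)| = ‖fderiv ℝ u x (x - y)‖ := rfl
      _ ≤ ‖fderiv ℝ u x‖ * r := h1
      _ ≤ (K1 : ℝ) * r := mul_le_mul_of_nonneg_right h2 hr.le
  have hr1s : r ^ ((1:ℝ) - s) ≤ 1 :=
    Real.rpow_le_one hr.le hr1 (by linarith)
  have hrpow1 : r / r ^ s = r ^ ((1:ℝ) - s) := by
    rw [Real.rpow_sub hr, Real.rpow_one]
  have hpK : p ≤ (K1 : ℝ) := by
    rw [hpdef, div_le_iff₀ hrs]
    calc |u x - u y| ≤ (K1 : ℝ) * r := huxy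
      _ = (K1 : ℝ) * (r / r ^ s) * r ^ s := by field_simp
      _ = (K1 : ℝ) * r ^ ((1:ℝ) - s) * r ^ s := by rw [hrpow1]
      _ ≤ (K1 : ℝ) * 1 * r ^ s := by
          have := mul_le_mul_of_nonneg_left hr1s K1.coe_nonneg
          exact mul_le_mul_of_nonneg_right (by simpa using this) hrs.le
      _ = (K1 : ℝ) * r ^ s := by ring
  have hqK : q ≤ (K1 : ℝ) := by
    rw [hqdef, div_le_iff₀ hrs]
    calc |fderiv ℝ u x (x - y)| ≤ (K1 : ℝ) * r := hfdxy
      _ = (K1 : ℝ) * (r / r ^ s) * r ^ s := by field_simp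
      _ = (K1 : ℝ) * r ^ ((1:ℝ) - s) * r ^ s := by rw [hrpow1]
      _ ≤ (K1 : ℝ) * 1 * r ^ s := by
          have := mul_le_mul_of_nonneg_left hr1s K1.coe_nonneg
          exact mul_le_mul_of_nonneg_right (by simpa using this) hrs.le
      _ = (K1 : ℝ) * r ^ s := by ring
  have hp0 : 0 ≤ p := div_nonneg (abs_nonneg _) hrs.le
  have hq0 : 0 ≤ q := div_nonneg (abs_nonneg _) hrs.le
  -- difference of the arguments
  have hpq : |p - q| ≤ (K2 : ℝ) * r ^ ((2:ℝ) - s) := by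
    have h1 : |p - q| = |(|u x - u y| - |fderiv ℝ u x (x - y)|)| / r ^ s := by
      rw [hpdef, hqdef, div_sub_div_same, abs_div, abs_of_pos hrs]
    have h2 : |(|u x - u y| - |fderiv ℝ u x (x - y)|)|
        ≤ |(u x - u y) - fderiv ℝ u x (x - y)| := abs_abs_sub_abs_le_abs_sub _ _
    have h3 : r ^ ((2:ℝ) - s) = r ^ (2:ℕ) / r ^ s := by
      rw [Real.rpow_sub hr, ← Real.rpow_natCast r 2]; norm_num
    rw [h1, h3, ← mul_div_assoc]
    rw [div_le_div_iff₀ hrs hrs]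
    calc |(|u x - u y| - |fderiv ℝ u x (x - y)|)| * r ^ s
        ≤ ((K2 : ℝ) * r ^ 2) * r ^ s := by
          exact mul_le_mul_of_nonneg_right (le_trans h2 hTaylor) hrs.le
      _ = (K2 : ℝ) * r ^ (2:ℕ) * r ^ s := by norm_num
  -- conclude
  have hrpow_nonneg : (0:ℝ) ≤ r ^ ((2:ℝ) - s) := Real.rpow_nonneg hr.le _
  have key : |A p - A q| ≤ a K1 * ((K2 : ℝ) * r ^ ((2:ℝ) - s)) := by
    refine le_trans (hAlip K1 p q hp0 hq0 hpK hqK) ?_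
    exact mul_le_mul_of_nonneg_left hpq (ha0 _)
  have hcoef : a (K1 : ℝ) * (K2 : ℝ) ≤ (a K1 + 1) * ((K2 : ℝ) + 1) := by
    have h1 : (0:ℝ) ≤ a K1 := ha0 _
    have h2 : (0:ℝ) ≤ (K2 : ℝ) := K2.coe_nonneg
    nlinarith
  have : ⟪gradient u x, x - y⟫ = fderiv ℝ u x (x - y) := hgrad
  rw [this]
  have hfinal : |A p - A q| ≤ (a K1 + 1) * ((K2 : ℝ) + 1) * r ^ ((2:ℝ) - s) := by
    calc |A p - A q| ≤ a K1 * ((K2 : ℝ) * r ^ ((2:ℝ) - s)) := key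
      _ = (a K1 * (K2 : ℝ)) * r ^ ((2:ℝ) - s) := by ring
      _ ≤ (a K1 + 1) * ((K2 : ℝ) + 1) * r ^ ((2:ℝ) - s) :=
          mul_le_mul_of_nonneg_right hcoef hrpow_nonneg
  simpa [hpdef, hqdef] using hfinal
end
end
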